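/- arXiv:2301.03525 — 5 statements merged into one kernel-verified Lean document; each statement's English description precedes it below -/
import Mathlib

section
/- Let L > 0 and let x : [0,L] → ℝ³ be a C³ curve parametrized by arc length (|x'(s)| = 1 for all s) with x''(s) ≠ 0 for all s. Set t = x', κ(s) = |t'(s)|, n = t'/κ, b = t × n, and let τ : [0,L] → ℝ be the torsion, defined by τ(s) = b'(s)·n(s). Suppose {t, d₁, d₂} is a positively oriented (d₂ = t × d₁) orthonormal moving frame of class C¹ along x satisfying d₁' = −u₂ t and d₂' = u₁ t for continuous functions u₁, u₂ : [0,L] → ℝ (so that t' = u₂ d₁ − u₁ d₂). Then there exists θ ∈ C¹([0,L]) such that θ' = τ, u₁ = κ sin θ and u₂ = κ cos θ on [0,L]; in particular √(u₁² + u₂²) = κ. -/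
open scoped RealInnerProductSpace

noncomputable def cross3 (u v : EuclideanSpace ℝ (Fin 3)) : EuclideanSpace ℝ (Fin 3) :=
  WithLp.toLp 2 ![u 1 * v 2 - u 2 * v 1, u 2 * v 0 - u 0 * v 2, u 0 * v 1 - u 1 * v 0]

/-!
In the frame `{d₁, d₂}` of the normal plane the Frenet vectors are `n = P d₁ - Q d₂` and
`b = Q d₁ + P d₂` with `(P, Q) = (u₂, u₁) / κ` a unit vector. Because `d₁'` and `d₂'` are
tangent while `b ⟂ t` and `b' ⟂ b`, the complex coordinate `w = P + i Q = ⟪b, d₂⟫ + i ⟪b, d₁⟫`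
of the binormal solves `w' = i ⟪b', n⟫ w = i τ w`. Hence `w = exp (i θ)` with
`θ = arg w(0) + ∫ τ`, which is `C¹` because `τ` is continuous for a `C³` curve.
-/

open Set

local notation "𝔼³" => EuclideanSpace ℝ (Fin 3)

theorem inner_eq_fin3 (u v : 𝔼³) : ⟪u, v⟫ = u 0 * v 0 + u 1 * v 1 + u 2 * v 2 := by
  simp [PiLp.inner_apply, Fin.sum_univ_three, mul_comm]

theorem cross3_add_right (u v w : 𝔼³) : cross3 u (v + w) = cross3 u v + cross3 u w := by
  ext i; fin_cases i <;> simp [cross3] <;> ring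

theorem cross3_smul_right (u : 𝔼³) (c : ℝ) (v : 𝔼³) : cross3 u (c • v) = c • cross3 u v := by
  ext i; fin_cases i <;> simp [cross3] <;> ring

theorem cross3_cross3_self_left (u v : 𝔼³) :
    cross3 u (cross3 u v) = ⟪u, v⟫ • u - ⟪u, u⟫ • v := by
  rw [inner_eq_fin3, inner_eq_fin3]
  ext i; fin_cases i <;> simp [cross3] <;> ring

theorem ContDiffOn.cross3 {n : WithTop ℕ∞} {s : Set ℝ} {f g : ℝ → 𝔼³} (hf : ContDiffOn ℝ n f s)
    (hg : ContDiffOn ℝ n g s) : ContDiffOn ℝ n (fun r => cross3 (f r) (g r)) s := by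
  rw [contDiffOn_euclidean] at hf hg ⊢
  intro i
  fin_cases i <;> exact ((hf _).mul (hg _)).sub ((hf _).mul (hg _))

theorem orthonormal_vec3_iff {E : Type*} [NormedAddCommGroup E] [InnerProductSpace ℝ E]
    {u v w : E} :
    Orthonormal ℝ ![u, v, w] ↔
      ‖u‖ = 1 ∧ ⟪u, v⟫ = 0 ∧ ⟪u, w⟫ = 0 ∧ ‖v‖ = 1 ∧ ⟪v, w⟫ = 0 ∧ ‖w‖ = 1 := by
  simp [orthonormal_vecCons_iff, Fin.forall_fin_succ, and_assoc]

theorem cross3_normal_plane {t d₁ d₂ : 𝔼³} (h : Orthonormal ℝ ![t, d₁, d₂])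
    (horient : d₂ = cross3 t d₁) (a c : ℝ) :
    cross3 t (a • d₁ + c • d₂) = a • d₂ - c • d₁ := by
  obtain ⟨ht, htd₁, -⟩ := orthonormal_vec3_iff.mp h
  have htd₂ : cross3 t d₂ = -d₁ := by
    rw [horient, cross3_cross3_self_left, htd₁, real_inner_self_eq_norm_sq, ht]
    simp
  rw [cross3_add_right, cross3_smul_right, cross3_smul_right, ← horient, htd₂]
  module

theorem normal_binormal_eq_of_orthonormal {t d₁ d₂ t' n b : 𝔼³} {u₁ u₂ κ : ℝ}
    (h : Orthonormal ℝ ![t, d₁, d₂]) (horient : d₂ = cross3 t d₁)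
    (ht' : t' = u₂ • d₁ - u₁ • d₂) (hκ : κ = ‖t'‖) (hn : n = κ⁻¹ • t')
    (hb : b = cross3 t n) :
    κ = √(u₁ ^ 2 + u₂ ^ 2) ∧ n = (u₂ / κ) • d₁ - (u₁ / κ) • d₂ ∧
      b = (u₁ / κ) • d₁ + (u₂ / κ) • d₂ := by
  obtain ⟨-, -, -, hd₁, hd₁d₂, hd₂⟩ := orthonormal_vec3_iff.mp h
  have hn' : n = (u₂ / κ) • d₁ + (-(u₁ / κ)) • d₂ := by rw [hn, ht']; module
  refine ⟨?_, by rw [hn']; module, ?_⟩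
  · rw [hκ, ht', norm_eq_sqrt_real_inner]
    congr 1
    simp only [inner_sub_left, inner_sub_right, real_inner_smul_left, real_inner_smul_right,
      real_inner_comm d₁ d₂, hd₁d₂]
    simp only [real_inner_self_eq_norm_sq, hd₁, hd₂]
    ring
  · rw [hb, hn', cross3_normal_plane h horient]
    module

theorem HasDerivWithinAt.inner_eq_zero_of_norm_eq_one {E : Type*} [NormedAddCommGroup E]
    [InnerProductSpace ℝ E] {f : ℝ → E} {f' : E} {s : Set ℝ} {x : ℝ}
    (hf : HasDerivWithinAt f f' s x) (hs : UniqueDiffWithinAt ℝ s x) (hx : x ∈ s)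
    (hnorm : ∀ y ∈ s, ‖f y‖ = 1) : ⟪f', f x⟫ = 0 := by
  have hconst : HasDerivWithinAt (fun y => ⟪f y, f y⟫) 0 s x :=
    (hasDerivWithinAt_const x s 1).congr_of_mem
      (fun y hy => by rw [real_inner_self_eq_norm_sq, hnorm y hy, one_pow]) hx
  have := hs.eq_deriv _ (hf.inner ℝ hf) hconst
  rw [real_inner_comm] at this
  linarith

open Complex in
theorem hasDerivWithinAt_rpaf_coords {E : Type*} [NormedAddCommGroup E] [InnerProductSpace ℝ E]
    {s : Set ℝ} {r : ℝ} (hs : UniqueDiffWithinAt ℝ s r) (hr : r ∈ s) {t d₁ d₂ b : ℝ → E} {b' : E} {u₁ u₂ P Q : ℝ → ℝ}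
    (horth : ∀ y ∈ s, Orthonormal ℝ ![t y, d₁ y, d₂ y])
    (hd₁ : HasDerivWithinAt d₁ (-(u₂ r) • t r) s r) (hd₂ : HasDerivWithinAt d₂ (u₁ r • t r) s r)
    (hb : HasDerivWithinAt b b' s r) (hbPQ : ∀ y ∈ s, b y = Q y • d₁ y + P y • d₂ y)
    (hPQ : ∀ y ∈ s, P y ^ 2 + Q y ^ 2 = 1) :
    HasDerivWithinAt (fun y => (P y : ℂ) + Q y * I)
      (I * ⟪b', P r • d₁ r - Q r • d₂ r⟫ * (P r + Q r * I)) s r := by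
  have hcoords : ∀ y ∈ s, ⟪b y, t y⟫ = 0 ∧ ⟪b y, d₁ y⟫ = Q y ∧ ⟪b y, d₂ y⟫ = P y := by
    intro y hy
    obtain ⟨-, htd₁, htd₂, hd₁, hd₁d₂, hd₂⟩ := orthonormal_vec3_iff.mp (horth y hy)
    simp [hbPQ y hy, inner_add_left, inner_add_right, real_inner_smul_left, real_inner_smul_right,
      real_inner_comm (t y), real_inner_comm (d₁ y) (d₂ y), htd₁, htd₂, hd₁d₂, hd₁, hd₂]
  have hnorm : ∀ y ∈ s, ‖b y‖ = 1 := by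
    intro y hy
    have hsq : ‖b y‖ ^ 2 = 1 := by
      rw [← real_inner_self_eq_norm_sq, ← hPQ y hy]
      nth_rewrite 2 [hbPQ y hy]
      rw [inner_add_right, real_inner_smul_right, real_inner_smul_right, (hcoords y hy).2.1,
        (hcoords y hy).2.2]
      ring
    exact (pow_eq_one_iff_of_nonneg (norm_nonneg _) two_ne_zero).mp hsq
  have hb'b := hb.inner_eq_zero_of_norm_eq_one hs hr hnorm
  have hP : HasDerivWithinAt P ⟪b', d₂ r⟫ s r :=
    ((hb.inner ℝ hd₂).congr_of_mem (fun y hy => (hcoords y hy).2.2.symm) hr).congr_deriv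
      (by rw [real_inner_smul_right, (hcoords r hr).1]; ring)
  have hQ : HasDerivWithinAt Q ⟪b', d₁ r⟫ s r :=
    ((hb.inner ℝ hd₁).congr_of_mem (fun y hy => (hcoords y hy).2.1.symm) hr).congr_deriv
      (by rw [real_inner_smul_right, (hcoords r hr).1]; ring)
  refine (hP.ofReal_comp.add (hQ.ofReal_comp.mul_const I)).congr_deriv ?_
  rw [hbPQ r hr, inner_add_right, real_inner_smul_right, real_inner_smul_right] at hb'b
  have hb'bC : (Q r : ℂ) * ⟪b', d₁ r⟫ + P r * ⟪b', d₂ r⟫ = 0 := by exact_mod_cast hb'b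
  have hPQC : (P r : ℂ) ^ 2 + Q r ^ 2 = 1 := by exact_mod_cast hPQ r hr
  rw [inner_sub_right, real_inner_smul_right, real_inner_smul_right]
  push_cast
  linear_combination (P r + Q r * I) * hb'bC - (⟪b', d₂ r⟫ + ⟪b', d₁ r⟫ * I) * hPQC
    + (Q r ^ 2 * ⟪b', d₂ r⟫ - P r * Q r * ⟪b', d₁ r⟫ : ℂ) * I_sq

theorem contDiffOn_of_hasDerivWithinAt {E : Type*} [NormedAddCommGroup E] [NormedSpace ℝ E]
    {n : WithTop ℕ∞} {f f' : ℝ → E} {s : Set ℝ} (hs : UniqueDiffOn ℝ s)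
    (hf : ContDiffOn ℝ (n + 1) f s) (hf' : ∀ x ∈ s, HasDerivWithinAt f (f' x) s x) :
    ContDiffOn ℝ n f' s :=
  (hf.derivWithin hs le_rfl).congr fun x hx => ((hf' x hx).derivWithin (hs x hx)).symm

theorem continuousOn_torsion {s : Set ℝ} (hs : UniqueDiffOn ℝ s) {x t t' n b b' : ℝ → 𝔼³}
    {κ τ : ℝ → ℝ} (hx : ContDiffOn ℝ 3 x s) (hxt : ∀ r ∈ s, HasDerivWithinAt x (t r) s r)
    (htt' : ∀ r ∈ s, HasDerivWithinAt t (t' r) s r) (ht' : ∀ r ∈ s, t' r ≠ 0)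
    (hκ : ∀ r ∈ s, κ r = ‖t' r‖) (hn : ∀ r ∈ s, n r = (κ r)⁻¹ • t' r)
    (hb : ∀ r ∈ s, b r = cross3 (t r) (n r)) (hbb' : ∀ r ∈ s, HasDerivWithinAt b (b' r) s r)
    (hτ : ∀ r ∈ s, τ r = ⟪b' r, n r⟫) : ContinuousOn τ s := by
  have htC : ContDiffOn ℝ 2 t s := contDiffOn_of_hasDerivWithinAt hs hx hxt
  have ht'C : ContDiffOn ℝ 1 t' s := contDiffOn_of_hasDerivWithinAt hs htC htt'
  have hκC : ContDiffOn ℝ 1 κ s := (ht'C.norm ℝ ht').congr hκ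
  have hnC : ContDiffOn ℝ 1 n s :=
    ((hκC.inv fun r hr => hκ r hr ▸ norm_ne_zero_iff.mpr (ht' r hr)).smul ht'C).congr hn
  have hbC : ContDiffOn ℝ 1 b s := ((htC.of_le one_le_two).cross3 hnC).congr hb
  have hb'C : ContDiffOn ℝ 0 b' s := contDiffOn_of_hasDerivWithinAt hs hbC hbb'
  exact (hb'C.continuousOn.inner hnC.continuousOn).congr hτ

open Complex in
theorem exists_angle_of_hasDerivWithinAt_eq_I_mul {a b : ℝ} (hab : a ≤ b) {w : ℝ → ℂ}
    {ω : ℝ → ℝ} (hω : ContinuousOn ω (Icc a b))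
    (hw : ∀ s ∈ Icc a b, HasDerivWithinAt w (I * ω s * w s) (Icc a b) s) (hwa : ‖w a‖ = 1) :
    ∃ θ : ℝ → ℝ, ContDiff ℝ 1 θ ∧ (∀ s ∈ Icc a b, HasDerivWithinAt θ (ω s) (Icc a b) s) ∧
      ∀ s ∈ Icc a b, w s = exp (θ s * I) := by
  set ω' := IccExtend hab ((Icc a b).domRestrict ω)
  have hω'c : Continuous ω' := (continuousOn_iff_continuous_domRestrict.mp hω).Icc_extend'
  have hω' : ∀ s ∈ Icc a b, ω' s = ω s := fun s hs => IccExtend_of_mem hab _ hs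
  set θ : ℝ → ℝ := fun r => arg (w a) + ∫ u in a..r, ω' u
  have hθ : ∀ r, HasDerivAt θ (ω' r) r := fun r =>
    (hω'c.integral_hasStrictDerivAt a r).hasDerivAt.const_add _
  have hθa : θ a = arg (w a) := by simp [θ]
  have hderiv : ∀ s ∈ Icc a b,
      HasDerivWithinAt (fun r => w r * exp (-(θ r * I))) 0 (Icc a b) s := fun s hs =>
    ((hw s hs).mul ((hθ s).hasDerivWithinAt.ofReal_comp.mul_const I).neg.cexp).congr_deriv
      (by rw [hω' s hs]; ring)
  have hconst : ∀ s ∈ Icc a b, w s * exp (-(θ s * I)) = 1 := by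
    intro s hs
    have hle := (convex_Icc a b).norm_image_sub_le_of_norm_hasDerivWithin_le (C := 0) hderiv
      (fun _ _ => by simp) (left_mem_Icc.mpr hab) hs
    rw [zero_mul, norm_le_zero_iff, sub_eq_zero] at hle
    rw [hle, hθa]
    nth_rewrite 1 [← Complex.norm_mul_exp_arg_mul_I (w a)]
    rw [hwa, ofReal_one, one_mul, ← exp_add, add_neg_cancel, exp_zero]
  refine ⟨θ, contDiff_one_iff_deriv.mpr ⟨fun r => (hθ r).differentiableAt, ?_⟩,
    fun s hs => hω' s hs ▸ (hθ s).hasDerivWithinAt, fun s hs => ?_⟩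
  · simpa only [funext fun r => (hθ r).deriv] using hω'c
  · rw [← mul_one (exp _), ← hconst s hs, mul_left_comm, ← exp_add]
    simp

theorem rpaf_serret_frenet_angle_general
    (L : ℝ) (hL : 0 < L)
    (x t n b t' b' : ℝ → EuclideanSpace ℝ (Fin 3)) (κ τ : ℝ → ℝ)
    (d₁ d₂ : ℝ → EuclideanSpace ℝ (Fin 3)) (u₁ u₂ : ℝ → ℝ)
    (hx : ContDiffOn ℝ 3 x (Set.Icc 0 L))
    (hxt : ∀ s ∈ Set.Icc (0:ℝ) L, HasDerivWithinAt x (t s) (Set.Icc 0 L) s)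
    (htder : ∀ s ∈ Set.Icc (0:ℝ) L, HasDerivWithinAt t (t' s) (Set.Icc 0 L) s)
    (ht'ne : ∀ s ∈ Set.Icc (0:ℝ) L, t' s ≠ 0)
    (hκ : ∀ s ∈ Set.Icc (0:ℝ) L, κ s = ‖t' s‖)
    (hn : ∀ s ∈ Set.Icc (0:ℝ) L, n s = (κ s)⁻¹ • t' s)
    (hb : ∀ s ∈ Set.Icc (0:ℝ) L, b s = cross3 (t s) (n s))
    (hbder : ∀ s ∈ Set.Icc (0:ℝ) L, HasDerivWithinAt b (b' s) (Set.Icc 0 L) s)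
    (hτ : ∀ s ∈ Set.Icc (0:ℝ) L, τ s = ⟪b' s, n s⟫)
    (horth : ∀ s ∈ Set.Icc (0:ℝ) L, Orthonormal ℝ ![t s, d₁ s, d₂ s])
    (horient : ∀ s ∈ Set.Icc (0:ℝ) L, d₂ s = cross3 (t s) (d₁ s))
    (hd₁der : ∀ s ∈ Set.Icc (0:ℝ) L, HasDerivWithinAt d₁ (-(u₂ s) • t s) (Set.Icc 0 L) s)
    (hd₂der : ∀ s ∈ Set.Icc (0:ℝ) L, HasDerivWithinAt d₂ (u₁ s • t s) (Set.Icc 0 L) s)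
    (hteq : ∀ s ∈ Set.Icc (0:ℝ) L, t' s = u₂ s • d₁ s - u₁ s • d₂ s) :
    ∃ θ : ℝ → ℝ, ContDiffOn ℝ 1 θ (Set.Icc 0 L) ∧
      (∀ s ∈ Set.Icc (0:ℝ) L, HasDerivWithinAt θ (τ s) (Set.Icc 0 L) s) ∧
      (∀ s ∈ Set.Icc (0:ℝ) L,
        u₁ s = κ s * Real.sin (θ s) ∧ u₂ s = κ s * Real.cos (θ s) ∧
        Real.sqrt (u₁ s ^ 2 + u₂ s ^ 2) = κ s) := by
  have hI : UniqueDiffOn ℝ (Icc (0:ℝ) L) := uniqueDiffOn_Icc hL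
  have hκ0 : ∀ s ∈ Icc (0:ℝ) L, κ s ≠ 0 := fun s hs =>
    hκ s hs ▸ norm_ne_zero_iff.mpr (ht'ne s hs)
  have hframe := fun s hs =>
    normal_binormal_eq_of_orthonormal (horth s hs) (horient s hs) (hteq s hs) (hκ s hs) (hn s hs)
      (hb s hs)
  set P : ℝ → ℝ := fun s => u₂ s / κ s
  set Q : ℝ → ℝ := fun s => u₁ s / κ s
  have hPQ : ∀ s ∈ Icc (0:ℝ) L, P s ^ 2 + Q s ^ 2 = 1 := fun s hs => by
    rw [div_pow, div_pow, ← add_div, div_eq_one_iff_eq (pow_ne_zero 2 (hκ0 s hs)),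
      (hframe s hs).1, Real.sq_sqrt (by positivity), add_comm]
  have hw : ∀ s ∈ Icc (0:ℝ) L, HasDerivWithinAt (fun r => (P r : ℂ) + Q r * Complex.I)
      (Complex.I * τ s * (P s + Q s * Complex.I)) (Icc 0 L) s := fun s hs => by
    rw [hτ s hs, (hframe s hs).2.1]
    exact hasDerivWithinAt_rpaf_coords (hI s hs) hs horth (hd₁der s hs) (hd₂der s hs)
      (hbder s hs) (fun r hr => (hframe r hr).2.2) hPQ
  obtain ⟨θ, hθC, hθτ, hθ⟩ := exists_angle_of_hasDerivWithinAt_eq_I_mul hL.le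
    (continuousOn_torsion hI hx hxt htder ht'ne hκ hn hb hbder hτ) hw
    (by rw [Complex.norm_add_mul_I, hPQ 0 (left_mem_Icc.mpr hL.le), Real.sqrt_one])
  refine ⟨θ, hθC.contDiffOn, hθτ, fun s hs => ⟨?_, ?_, (hframe s hs).1.symm⟩⟩
  · have hsin : Real.sin (θ s) = Q s := by simpa using congrArg Complex.im (hθ s hs).symm
    rw [hsin, mul_div_cancel₀ _ (hκ0 s hs)]
  · have hcos : Real.cos (θ s) = P s := by simpa using congrArg Complex.re (hθ s hs).symm
    rw [hcos, mul_div_cancel₀ _ (hκ0 s hs)]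

/-- For a unit-speed `C³` curve `x` on `[0,L]` with nonvanishing
second derivative, with Serret–Frenet data `κ = |t'|`, `n = t'/κ`, `b = t × n`,
`τ = b'·n`, and a positively-oriented `C¹` RPAF `{t, d₁, d₂}` with flexural
densities `u₁, u₂`, there is a `C¹` angle `θ` with `θ' = τ`, `u₁ = κ sin θ`,
`u₂ = κ cos θ`; in particular `√(u₁² + u₂²) = κ`. -/
theorem rpaf_serret_frenet_angle
    (L : ℝ) (hL : 0 < L)
    (x t n b t' b' : ℝ → EuclideanSpace ℝ (Fin 3)) (κ τ : ℝ → ℝ)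
    (d₁ d₂ : ℝ → EuclideanSpace ℝ (Fin 3)) (u₁ u₂ : ℝ → ℝ)
    (hx : ContDiffOn ℝ 3 x (Set.Icc 0 L))
    (hxt : ∀ s ∈ Set.Icc (0:ℝ) L, HasDerivWithinAt x (t s) (Set.Icc 0 L) s)
    (hunit : ∀ s ∈ Set.Icc (0:ℝ) L, ‖t s‖ = 1)
    (htder : ∀ s ∈ Set.Icc (0:ℝ) L, HasDerivWithinAt t (t' s) (Set.Icc 0 L) s)
    (ht'ne : ∀ s ∈ Set.Icc (0:ℝ) L, t' s ≠ 0)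
    (hκ : ∀ s ∈ Set.Icc (0:ℝ) L, κ s = ‖t' s‖)
    (hn : ∀ s ∈ Set.Icc (0:ℝ) L, n s = (κ s)⁻¹ • t' s)
    (hb : ∀ s ∈ Set.Icc (0:ℝ) L, b s = cross3 (t s) (n s))
    (hbder : ∀ s ∈ Set.Icc (0:ℝ) L, HasDerivWithinAt b (b' s) (Set.Icc 0 L) s)
    (hτ : ∀ s ∈ Set.Icc (0:ℝ) L, τ s = ⟪b' s, n s⟫)
    (hd₁C1 : ContDiffOn ℝ 1 d₁ (Set.Icc 0 L))
    (hd₂C1 : ContDiffOn ℝ 1 d₂ (Set.Icc 0 L))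
    (horth : ∀ s ∈ Set.Icc (0:ℝ) L, Orthonormal ℝ ![t s, d₁ s, d₂ s])
    (horient : ∀ s ∈ Set.Icc (0:ℝ) L, d₂ s = cross3 (t s) (d₁ s))
    (hu₁c : ContinuousOn u₁ (Set.Icc 0 L))
    (hu₂c : ContinuousOn u₂ (Set.Icc 0 L))
    (hd₁der : ∀ s ∈ Set.Icc (0:ℝ) L, HasDerivWithinAt d₁ (-(u₂ s) • t s) (Set.Icc 0 L) s)
    (hd₂der : ∀ s ∈ Set.Icc (0:ℝ) L, HasDerivWithinAt d₂ (u₁ s • t s) (Set.Icc 0 L) s)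
    (hteq : ∀ s ∈ Set.Icc (0:ℝ) L, t' s = u₂ s • d₁ s - u₁ s • d₂ s) :
    ∃ θ : ℝ → ℝ, ContDiffOn ℝ 1 θ (Set.Icc 0 L) ∧
      (∀ s ∈ Set.Icc (0:ℝ) L, HasDerivWithinAt θ (τ s) (Set.Icc 0 L) s) ∧
      (∀ s ∈ Set.Icc (0:ℝ) L,
        u₁ s = κ s * Real.sin (θ s) ∧ u₂ s = κ s * Real.cos (θ s) ∧
        Real.sqrt (u₁ s ^ 2 + u₂ s ^ 2) = κ s) :=
  rpaf_serret_frenet_angle_general L hL x t n b t' b' κ τ d₁ d₂ u₁ u₂ hx hxt htder ht'ne hκ hn hb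
    hbder hτ horth horient hd₁der hd₂der hteq
end

section
/- Let L > 0 and let t : [0,L] → ℝ³ be differentiable with |t(s)| = 1 for all s. Let {t, d₁, d₂} and {t, d̃₁, d̃₂} be two differentiable orthonormal moving frames along [0,L], each having d₁', d₂' (respectively d̃₁', d̃₂') pointwise parallel to t. Suppose θ : [0,L] → ℝ is differentiable and d̃₁ = cos θ · d₁ − sin θ · d₂, d̃₂ = sin θ · d₁ + cos θ · d₂ on [0,L]. Then θ'(s) = 0 for all s ∈ [0,L], i.e. θ is constant. -/
/-!
Differentiating `e₁ = cos θ • d₁ - sin θ • d₂` gives `e₁' = cos θ • d₁' - sin θ • d₂' - θ' • e₂`.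
Here `e₁'`, `d₁'`, `d₂'` are multiples of `t` while `e₂` is a unit vector orthogonal to `t`,
so `θ' = 0`.
-/

open scoped RealInnerProductSpace

theorem HasDerivWithinAt.cos_smul_sub_sin_smul {E : Type*} [NormedAddCommGroup E]
    [NormedSpace ℝ E] {f g : ℝ → E} {θ : ℝ → ℝ} {f' g' : E} {θ' : ℝ} {S : Set ℝ} {x : ℝ}
    (hθ : HasDerivWithinAt θ θ' S x) (hf : HasDerivWithinAt f f' S x)
    (hg : HasDerivWithinAt g g' S x) :
    HasDerivWithinAt (fun u => Real.cos (θ u) • f u - Real.sin (θ u) • g u)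
      (Real.cos (θ x) • f' - Real.sin (θ x) • g'
        - θ' • (Real.sin (θ x) • f x + Real.cos (θ x) • g x)) S x := by
  refine ((hθ.cos.smul hf).sub (hθ.sin.smul hg)).congr_deriv ?_
  module

theorem eq_zero_of_smul_eq_smul_of_inner_eq_zero {E : Type*} [NormedAddCommGroup E]
    [InnerProductSpace ℝ E] {t e : E} {a b : ℝ} (hte : ⟪t, e⟫ = 0) (he : e ≠ 0)
    (h : b • e = a • t) : b = 0 := by
  have hinner : b * ⟪e, e⟫ = 0 := by
    rw [← real_inner_smul_left, h, real_inner_smul_left, hte, mul_zero]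
  exact (mul_eq_zero.mp hinner).resolve_right (inner_self_ne_zero.mpr he)

theorem rpaf_rotation_angle_constant_general
    (L : ℝ) (hL : 0 < L)
    (t d₁ d₂ e₁ e₂ d₁' d₂' e₁' : ℝ → EuclideanSpace ℝ (Fin 3)) (θ θ' : ℝ → ℝ)
    (horth' : ∀ s ∈ Set.Icc (0:ℝ) L, Orthonormal ℝ ![t s, e₁ s, e₂ s])
    (hd₁der : ∀ s ∈ Set.Icc (0:ℝ) L, HasDerivWithinAt d₁ (d₁' s) (Set.Icc 0 L) s)
    (hd₂der : ∀ s ∈ Set.Icc (0:ℝ) L, HasDerivWithinAt d₂ (d₂' s) (Set.Icc 0 L) s)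
    (he₁der : ∀ s ∈ Set.Icc (0:ℝ) L, HasDerivWithinAt e₁ (e₁' s) (Set.Icc 0 L) s)
    (hpard₁ : ∀ s ∈ Set.Icc (0:ℝ) L, ∃ c : ℝ, d₁' s = c • t s)
    (hpard₂ : ∀ s ∈ Set.Icc (0:ℝ) L, ∃ c : ℝ, d₂' s = c • t s)
    (hpare₁ : ∀ s ∈ Set.Icc (0:ℝ) L, ∃ c : ℝ, e₁' s = c • t s)
    (hθder : ∀ s ∈ Set.Icc (0:ℝ) L, HasDerivWithinAt θ (θ' s) (Set.Icc 0 L) s)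
    (hrot₁ : ∀ s ∈ Set.Icc (0:ℝ) L,
      e₁ s = Real.cos (θ s) • d₁ s - Real.sin (θ s) • d₂ s)
    (hrot₂ : ∀ s ∈ Set.Icc (0:ℝ) L,
      e₂ s = Real.sin (θ s) • d₁ s + Real.cos (θ s) • d₂ s) :
    ∀ s ∈ Set.Icc (0:ℝ) L, θ' s = 0 := by
  intro s hs
  have hte₂ : ⟪t s, e₂ s⟫ = 0 := by
    simpa using (horth' s hs).inner_eq_zero (i := 0) (j := 2) (by decide)
  have he₂ : e₂ s ≠ 0 := by simpa using (horth' s hs).ne_zero 2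
  have hderiv : HasDerivWithinAt e₁
      (Real.cos (θ s) • d₁' s - Real.sin (θ s) • d₂' s - θ' s • e₂ s) (Set.Icc 0 L) s := by
    rw [hrot₂ s hs]
    exact ((hθder s hs).cos_smul_sub_sin_smul (hd₁der s hs) (hd₂der s hs)).congr
      hrot₁ (hrot₁ s hs)
  have he₁' := (uniqueDiffOn_Icc hL s hs).eq_deriv _ (he₁der s hs) hderiv
  obtain ⟨c₁, hc₁⟩ := hpard₁ s hs
  obtain ⟨c₂, hc₂⟩ := hpard₂ s hs
  obtain ⟨c, hc⟩ := hpare₁ s hs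
  rw [hc, hc₁, hc₂] at he₁'
  refine eq_zero_of_smul_eq_smul_of_inner_eq_zero
    (a := Real.cos (θ s) * c₁ - Real.sin (θ s) * c₂ - c) hte₂ he₂ ?_
  linear_combination (norm := module) he₁'

/-- If two relatively parallel adapted frames along the same unit
tangent field are related by a differentiable rotation angle `θ`, then `θ' = 0`
on `[0,L]`, i.e. `θ` is constant. -/
theorem rpaf_rotation_angle_constant
    (L : ℝ) (hL : 0 < L)
    (t d₁ d₂ e₁ e₂ d₁' d₂' e₁' e₂' : ℝ → EuclideanSpace ℝ (Fin 3)) (θ θ' : ℝ → ℝ)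
    (htdiff : ∀ s ∈ Set.Icc (0:ℝ) L, DifferentiableWithinAt ℝ t (Set.Icc 0 L) s)
    (hunit : ∀ s ∈ Set.Icc (0:ℝ) L, ‖t s‖ = 1)
    (horth : ∀ s ∈ Set.Icc (0:ℝ) L, Orthonormal ℝ ![t s, d₁ s, d₂ s])
    (horth' : ∀ s ∈ Set.Icc (0:ℝ) L, Orthonormal ℝ ![t s, e₁ s, e₂ s])
    (hd₁der : ∀ s ∈ Set.Icc (0:ℝ) L, HasDerivWithinAt d₁ (d₁' s) (Set.Icc 0 L) s)
    (hd₂der : ∀ s ∈ Set.Icc (0:ℝ) L, HasDerivWithinAt d₂ (d₂' s) (Set.Icc 0 L) s)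
    (he₁der : ∀ s ∈ Set.Icc (0:ℝ) L, HasDerivWithinAt e₁ (e₁' s) (Set.Icc 0 L) s)
    (he₂der : ∀ s ∈ Set.Icc (0:ℝ) L, HasDerivWithinAt e₂ (e₂' s) (Set.Icc 0 L) s)
    (hpard₁ : ∀ s ∈ Set.Icc (0:ℝ) L, ∃ c : ℝ, d₁' s = c • t s)
    (hpard₂ : ∀ s ∈ Set.Icc (0:ℝ) L, ∃ c : ℝ, d₂' s = c • t s)
    (hpare₁ : ∀ s ∈ Set.Icc (0:ℝ) L, ∃ c : ℝ, e₁' s = c • t s)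
    (hpare₂ : ∀ s ∈ Set.Icc (0:ℝ) L, ∃ c : ℝ, e₂' s = c • t s)
    (hθder : ∀ s ∈ Set.Icc (0:ℝ) L, HasDerivWithinAt θ (θ' s) (Set.Icc 0 L) s)
    (hrot₁ : ∀ s ∈ Set.Icc (0:ℝ) L,
      e₁ s = Real.cos (θ s) • d₁ s - Real.sin (θ s) • d₂ s)
    (hrot₂ : ∀ s ∈ Set.Icc (0:ℝ) L,
      e₂ s = Real.sin (θ s) • d₁ s + Real.cos (θ s) • d₂ s) :
    ∀ s ∈ Set.Icc (0:ℝ) L, θ' s = 0 :=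
  rpaf_rotation_angle_constant_general L hL t d₁ d₂ e₁ e₂ d₁' d₂' e₁' θ θ' horth' hd₁der hd₂der
    he₁der hpard₁ hpard₂ hpare₁ hθder hrot₁ hrot₂
end

section
/- Let L > 0 and let t : [0,L] → ℝ³ be differentiable with |t(s)| = 1 for all s. Let {t, d₁, d₂} and {t, d̃₁, d̃₂} be two differentiable orthonormal moving frames along [0,L], each having its two normal fields' derivatives pointwise parallel to t. Then for each pair i, j ∈ {1,2}, the function s ↦ d̃ᵢ(s)·dⱼ(s) is constant on [0,L]. Consequently the two frames differ by a rotation of the normal plane that does not depend on s. -/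
open scoped RealInnerProductSpace
open Set

/-!
The derivative of `⟪e, d⟫` is `⟪e', d⟫ + ⟪e, d'⟫`; both `e'` and `d'` are multiples of `t`,
which is orthogonal to the normal fields `e` and `d`, so it vanishes and `⟪e, d⟫` is constant.
Since the normal plane is spanned by `d₁, d₂`, expanding `eᵢ` in this basis then has constant
coefficients.
-/

variable {E : Type*} [NormedAddCommGroup E] [InnerProductSpace ℝ E]

theorem Orthonormal.inner_head_eq_zero {t a b : E} (h : Orthonormal ℝ ![t, a, b]) :
    ⟪t, a⟫ = 0 ∧ ⟪t, b⟫ = 0 :=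
  ⟨by simpa using h.2 (show (0 : Fin 3) ≠ 1 by decide),
    by simpa using h.2 (show (0 : Fin 3) ≠ 2 by decide)⟩

theorem Orthonormal.eq_inner_smul_add_inner_smul (hE : Module.finrank ℝ E = 3)
    {t a b v : E} (h : Orthonormal ℝ ![t, a, b]) (hv : ⟪t, v⟫ = 0) :
    v = ⟪v, a⟫ • a + ⟪v, b⟫ • b := by
  let B := OrthonormalBasis.mk h
    (h.linearIndependent.span_eq_top_of_card_eq_finrank (by simp [hE])).ge
  have := B.sum_repr' v
  simp only [B, OrthonormalBasis.coe_mk, Fin.sum_univ_three, Matrix.cons_val_zero,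
    Matrix.cons_val_one, Matrix.cons_val, hv, zero_smul, zero_add] at this
  rw [real_inner_comm a, real_inner_comm b, this]

theorem eq_left_of_hasDerivWithinAt_Icc_zero {F : Type*} [NormedAddCommGroup F] [NormedSpace ℝ F]
    {f : ℝ → F} {a b : ℝ} (hf : ∀ x ∈ Icc a b, HasDerivWithinAt f 0 (Icc a b) x) :
    ∀ x ∈ Icc a b, f x = f a :=
  constant_of_has_deriv_right_zero (fun x hx => (hf x hx).continuousWithinAt) fun x hx =>
    (hf x (Ico_subset_Icc_self hx)).mono_of_mem_nhdsWithin (Icc_mem_nhdsGE_of_mem hx)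

theorem inner_eq_inner_left_of_deriv_parallel {a b : ℝ} {t f g f' g' : ℝ → E}
    (hf : ∀ s ∈ Icc a b, HasDerivWithinAt f (f' s) (Icc a b) s)
    (hg : ∀ s ∈ Icc a b, HasDerivWithinAt g (g' s) (Icc a b) s)
    (hf' : ∀ s ∈ Icc a b, ∃ c : ℝ, f' s = c • t s)
    (hg' : ∀ s ∈ Icc a b, ∃ c : ℝ, g' s = c • t s)
    (hft : ∀ s ∈ Icc a b, ⟪t s, f s⟫ = 0) (hgt : ∀ s ∈ Icc a b, ⟪t s, g s⟫ = 0) :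
    ∀ s ∈ Icc a b, ⟪f s, g s⟫ = ⟪f a, g a⟫ := by
  refine eq_left_of_hasDerivWithinAt_Icc_zero fun s hs => ?_
  obtain ⟨c, hc⟩ := hf' s hs
  obtain ⟨c', hc'⟩ := hg' s hs
  have h := (hf s hs).inner ℝ (hg s hs)
  rwa [hc, hc', inner_smul_right, inner_smul_left, real_inner_comm, hft s hs, hgt s hs,
    mul_zero, mul_zero, add_zero] at h

theorem rpaf_frames_differ_by_constant_rotation_general
    (L : ℝ)
    (t d₁ d₂ e₁ e₂ d₁' d₂' e₁' e₂' : ℝ → EuclideanSpace ℝ (Fin 3))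
    (horth : ∀ s ∈ Set.Icc (0:ℝ) L, Orthonormal ℝ ![t s, d₁ s, d₂ s])
    (horth' : ∀ s ∈ Set.Icc (0:ℝ) L, Orthonormal ℝ ![t s, e₁ s, e₂ s])
    (hd₁der : ∀ s ∈ Set.Icc (0:ℝ) L, HasDerivWithinAt d₁ (d₁' s) (Set.Icc 0 L) s)
    (hd₂der : ∀ s ∈ Set.Icc (0:ℝ) L, HasDerivWithinAt d₂ (d₂' s) (Set.Icc 0 L) s)
    (he₁der : ∀ s ∈ Set.Icc (0:ℝ) L, HasDerivWithinAt e₁ (e₁' s) (Set.Icc 0 L) s)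
    (he₂der : ∀ s ∈ Set.Icc (0:ℝ) L, HasDerivWithinAt e₂ (e₂' s) (Set.Icc 0 L) s)
    (hpard₁ : ∀ s ∈ Set.Icc (0:ℝ) L, ∃ c : ℝ, d₁' s = c • t s)
    (hpard₂ : ∀ s ∈ Set.Icc (0:ℝ) L, ∃ c : ℝ, d₂' s = c • t s)
    (hpare₁ : ∀ s ∈ Set.Icc (0:ℝ) L, ∃ c : ℝ, e₁' s = c • t s)
    (hpare₂ : ∀ s ∈ Set.Icc (0:ℝ) L, ∃ c : ℝ, e₂' s = c • t s) :
    (∀ s₁ ∈ Set.Icc (0:ℝ) L, ∀ s₂ ∈ Set.Icc (0:ℝ) L,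
      ⟪e₁ s₁, d₁ s₁⟫ = ⟪e₁ s₂, d₁ s₂⟫ ∧ ⟪e₁ s₁, d₂ s₁⟫ = ⟪e₁ s₂, d₂ s₂⟫ ∧
      ⟪e₂ s₁, d₁ s₁⟫ = ⟪e₂ s₂, d₁ s₂⟫ ∧ ⟪e₂ s₁, d₂ s₁⟫ = ⟪e₂ s₂, d₂ s₂⟫) ∧
    ∃ A B Γ Δ : ℝ, ∀ s ∈ Set.Icc (0:ℝ) L,
      e₁ s = A • d₁ s + B • d₂ s ∧ e₂ s = Γ • d₁ s + Δ • d₂ s := by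
  have hd := fun s hs => (horth s hs).inner_head_eq_zero
  have he := fun s hs => (horth' s hs).inner_head_eq_zero
  have h₁₁ := inner_eq_inner_left_of_deriv_parallel he₁der hd₁der hpare₁ hpard₁
    (fun s hs => (he s hs).1) (fun s hs => (hd s hs).1)
  have h₁₂ := inner_eq_inner_left_of_deriv_parallel he₁der hd₂der hpare₁ hpard₂
    (fun s hs => (he s hs).1) (fun s hs => (hd s hs).2)
  have h₂₁ := inner_eq_inner_left_of_deriv_parallel he₂der hd₁der hpare₂ hpard₁
    (fun s hs => (he s hs).2) (fun s hs => (hd s hs).1)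
  have h₂₂ := inner_eq_inner_left_of_deriv_parallel he₂der hd₂der hpare₂ hpard₂
    (fun s hs => (he s hs).2) (fun s hs => (hd s hs).2)
  have hdim : Module.finrank ℝ (EuclideanSpace ℝ (Fin 3)) = 3 := by simp
  refine ⟨fun s₁ hs₁ s₂ hs₂ => ⟨?_, ?_, ?_, ?_⟩,
    ⟪e₁ 0, d₁ 0⟫, ⟪e₁ 0, d₂ 0⟫, ⟪e₂ 0, d₁ 0⟫, ⟪e₂ 0, d₂ 0⟫, fun s hs => ⟨?_, ?_⟩⟩
  · rw [h₁₁ s₁ hs₁, h₁₁ s₂ hs₂]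
  · rw [h₁₂ s₁ hs₁, h₁₂ s₂ hs₂]
  · rw [h₂₁ s₁ hs₁, h₂₁ s₂ hs₂]
  · rw [h₂₂ s₁ hs₁, h₂₂ s₂ hs₂]
  · rw [← h₁₁ s hs, ← h₁₂ s hs]
    exact (horth s hs).eq_inner_smul_add_inner_smul hdim (he s hs).1
  · rw [← h₂₁ s hs, ← h₂₂ s hs]
    exact (horth s hs).eq_inner_smul_add_inner_smul hdim (he s hs).2

/-- Two relatively parallel adapted frames along the same unit tangent
field have constant mutual inner products; consequently they differ by an
`s`-independent rotation of the normal plane. -/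
theorem rpaf_frames_differ_by_constant_rotation
    (L : ℝ) (hL : 0 < L)
    (t d₁ d₂ e₁ e₂ d₁' d₂' e₁' e₂' : ℝ → EuclideanSpace ℝ (Fin 3))
    (htdiff : ∀ s ∈ Set.Icc (0:ℝ) L, DifferentiableWithinAt ℝ t (Set.Icc 0 L) s)
    (hunit : ∀ s ∈ Set.Icc (0:ℝ) L, ‖t s‖ = 1)
    (horth : ∀ s ∈ Set.Icc (0:ℝ) L, Orthonormal ℝ ![t s, d₁ s, d₂ s])
    (horth' : ∀ s ∈ Set.Icc (0:ℝ) L, Orthonormal ℝ ![t s, e₁ s, e₂ s])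
    (hd₁der : ∀ s ∈ Set.Icc (0:ℝ) L, HasDerivWithinAt d₁ (d₁' s) (Set.Icc 0 L) s)
    (hd₂der : ∀ s ∈ Set.Icc (0:ℝ) L, HasDerivWithinAt d₂ (d₂' s) (Set.Icc 0 L) s)
    (he₁der : ∀ s ∈ Set.Icc (0:ℝ) L, HasDerivWithinAt e₁ (e₁' s) (Set.Icc 0 L) s)
    (he₂der : ∀ s ∈ Set.Icc (0:ℝ) L, HasDerivWithinAt e₂ (e₂' s) (Set.Icc 0 L) s)
    (hpard₁ : ∀ s ∈ Set.Icc (0:ℝ) L, ∃ c : ℝ, d₁' s = c • t s)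
    (hpard₂ : ∀ s ∈ Set.Icc (0:ℝ) L, ∃ c : ℝ, d₂' s = c • t s)
    (hpare₁ : ∀ s ∈ Set.Icc (0:ℝ) L, ∃ c : ℝ, e₁' s = c • t s)
    (hpare₂ : ∀ s ∈ Set.Icc (0:ℝ) L, ∃ c : ℝ, e₂' s = c • t s) :
    (∀ s₁ ∈ Set.Icc (0:ℝ) L, ∀ s₂ ∈ Set.Icc (0:ℝ) L,
      ⟪e₁ s₁, d₁ s₁⟫ = ⟪e₁ s₂, d₁ s₂⟫ ∧ ⟪e₁ s₁, d₂ s₁⟫ = ⟪e₁ s₂, d₂ s₂⟫ ∧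
      ⟪e₂ s₁, d₁ s₁⟫ = ⟪e₂ s₂, d₁ s₂⟫ ∧ ⟪e₂ s₁, d₂ s₁⟫ = ⟪e₂ s₂, d₂ s₂⟫) ∧
    ∃ A B Γ Δ : ℝ, ∀ s ∈ Set.Icc (0:ℝ) L,
      e₁ s = A • d₁ s + B • d₂ s ∧ e₂ s = Γ • d₁ s + Δ • d₂ s :=
  rpaf_frames_differ_by_constant_rotation_general L t d₁ d₂ e₁ e₂ d₁' d₂' e₁' e₂' horth horth'
    hd₁der hd₂der he₁der he₂der hpard₁ hpard₂ hpare₁ hpare₂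
end

section
/- Let L > 0, let t : [0,L] → ℝ³ be differentiable with continuous derivative and |t(s)| = 1 for all s, and let d₁⁰, d₂⁰ ∈ ℝ³ be such that {t(0), d₁⁰, d₂⁰} is an orthonormal set. Suppose u₁, u₂ : [0,L] → ℝ are continuous and satisfy u₁(s) = −d₂⁰·t'(s) − ∫₀ˢ u₁(r) (t(r)·t'(s)) dr and u₂(s) = d₁⁰·t'(s) − ∫₀ˢ u₂(r) (t(r)·t'(s)) dr, and define d₁(s) = d₁⁰ − ∫₀ˢ u₂(r) t(r) dr and d₂(s) = d₂⁰ + ∫₀ˢ u₁(r) t(r) dr. Then {t(s), d₁(s), d₂(s)} is an orthonormal set for every s ∈ [0,L], and the frame satisfies t' = u₂ d₁ − u₁ d₂, d₁' = −u₂ t, d₂' = u₁ t on [0,L], i.e. it is a relatively parallel adapted frame with initial data t(0), d₁⁰, d₂⁰. -/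
/-!
Differentiating the defining integrals gives `d₁' = -u₂ t` and `d₂' = u₁ t`, and pairing those
integrals with `t'` turns the Volterra equations into `⟪d₁, t'⟫ = u₂` and `⟪d₂, t'⟫ = -u₁`.
With `‖t‖ = 1` these make the derivative of every entry of the Gram matrix of `(t, d₁, d₂)`
vanish, so the frame stays orthonormal. Since also `⟪t, t'⟫ = 0`, expanding `t'` in this
orthonormal basis of `ℝ³` gives `t' = u₂ d₁ - u₁ d₂`.
-/

open scoped RealInnerProductSpace
open Set

section
variable {E : Type*} [NormedAddCommGroup E] {a b x : ℝ} {g : ℝ → E}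

theorem ContinuousOn.intervalIntegrable_of_mem_Icc (hg : ContinuousOn g (Icc a b))
    (hx : x ∈ Icc a b) : IntervalIntegrable g MeasureTheory.volume a x :=
  (hg.mono (Icc_subset_Icc_right hx.2)).intervalIntegrable_of_Icc hx.1

theorem ContinuousOn.hasDerivWithinAt_integral_Icc [NormedSpace ℝ E] [CompleteSpace E]
    (hg : ContinuousOn g (Icc a b)) (hx : x ∈ Icc a b) :
    HasDerivWithinAt (fun y => ∫ r in a..y, g r) (g x) (Icc a b) x := by
  have : Fact (x ∈ Icc a b) := ⟨hx⟩
  exact intervalIntegral.integral_hasDerivWithinAt_right (hg.intervalIntegrable_of_mem_Icc hx)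
    (hg.stronglyMeasurableAtFilter_nhdsWithin measurableSet_Icc x) (hg x hx)

end

section
variable {E : Type*} [NormedAddCommGroup E] [InnerProductSpace ℝ E]

theorem intervalIntegral.inner_integral_left [CompleteSpace E] {f : ℝ → E} {a b : ℝ}
    (hf : IntervalIntegrable f MeasureTheory.volume a b) (v : E) :
    ⟪∫ r in a..b, f r, v⟫ = ∫ r in a..b, ⟪f r, v⟫ := by
  rw [real_inner_comm, ← innerSL_apply_apply ℝ, ← (innerSL ℝ v).intervalIntegral_comp_comm hf]
  simp_rw [innerSL_apply_apply, real_inner_comm v]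

theorem inner_eq_zero_of_hasDerivWithinAt_of_norm_eq {f : ℝ → E} {f' : E} {s : Set ℝ} {x c : ℝ}
    (hf : HasDerivWithinAt f f' s x) (hs : UniqueDiffWithinAt ℝ s x) (hx : x ∈ s)
    (hc : ∀ y ∈ s, ‖f y‖ = c) : ⟪f x, f'⟫ = 0 := by
  have hconst : HasDerivWithinAt (‖f ·‖ ^ 2) 0 s x :=
    (hasDerivWithinAt_const x s (c ^ 2)).congr (fun y hy => by rw [hc y hy]) (by rw [hc x hx])
  have := hs.eq_deriv s hf.norm_sq hconst
  linarith

theorem inner_const_of_hasDerivWithinAt_Icc {a b : ℝ} {f g f' g' : ℝ → E}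
    (hf : ∀ x ∈ Icc a b, HasDerivWithinAt f (f' x) (Icc a b) x)
    (hg : ∀ x ∈ Icc a b, HasDerivWithinAt g (g' x) (Icc a b) x)
    (h : ∀ x ∈ Icc a b, ⟪f x, g' x⟫ + ⟪f' x, g x⟫ = 0) :
    ∀ x ∈ Icc a b, ⟪f x, g x⟫ = ⟪f a, g a⟫ := by
  have hder : ∀ x ∈ Icc a b, HasDerivWithinAt (fun y => ⟪f y, g y⟫) 0 (Icc a b) x :=
    fun x hx => h x hx ▸ (hf x hx).inner ℝ (hg x hx)
  refine constant_of_has_deriv_right_zero (fun x hx => (hder x hx).continuousWithinAt) ?_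
  exact fun x hx => (hder x (Ico_subset_Icc_self hx)).mono_of_mem_nhdsWithin
    (Icc_mem_nhdsGE_of_mem hx)

theorem Orthonormal.sum_inner_smul_eq {ι : Type*} [Fintype ι] [FiniteDimensional ℝ E]
    {v : ι → E} (hv : Orthonormal ℝ v) (hcard : Fintype.card ι = Module.finrank ℝ E) (x : E) :
    ∑ i, ⟪v i, x⟫ • v i = x := by
  have hsp := hv.linearIndependent.span_eq_top_of_card_eq_finrank' hcard
  simpa using (OrthonormalBasis.mk hv hsp.ge).sum_repr' x

theorem Orthonormal.eq_inner_smul_add_three [FiniteDimensional ℝ E] {x y z : E}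
    (h : Orthonormal ℝ ![x, y, z]) (hE : Module.finrank ℝ E = 3) (v : E) :
    v = ⟪x, v⟫ • x + ⟪y, v⟫ • y + ⟪z, v⟫ • z := by
  simpa [Fin.sum_univ_three] using (h.sum_inner_smul_eq (by simp [hE]) v).symm

theorem orthonormal_vecCons_three_iff {x y z : E} :
    Orthonormal ℝ ![x, y, z] ↔
      ⟪x, x⟫ = 1 ∧ ⟪y, y⟫ = 1 ∧ ⟪z, z⟫ = 1 ∧ ⟪x, y⟫ = 0 ∧ ⟪x, z⟫ = 0 ∧ ⟪y, z⟫ = 0 := by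
  have hne : ∀ v : E, ‖v‖ ≠ -1 := fun v h => by linarith [norm_nonneg v]
  simp [Fin.forall_fin_succ, hne]
  tauto

theorem orthonormal_of_hasDerivWithinAt_frame {a b : ℝ} {t t' d₁ d₂ : ℝ → E} {u₁ u₂ : ℝ → ℝ}
    (ht : ∀ x ∈ Icc a b, HasDerivWithinAt t (t' x) (Icc a b) x)
    (hd₁ : ∀ x ∈ Icc a b, HasDerivWithinAt d₁ (-u₂ x • t x) (Icc a b) x)
    (hd₂ : ∀ x ∈ Icc a b, HasDerivWithinAt d₂ (u₁ x • t x) (Icc a b) x)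
    (hunit : ∀ x ∈ Icc a b, ‖t x‖ = 1)
    (hu₁ : ∀ x ∈ Icc a b, ⟪d₂ x, t' x⟫ = -u₁ x)
    (hu₂ : ∀ x ∈ Icc a b, ⟪d₁ x, t' x⟫ = u₂ x)
    (h₀ : Orthonormal ℝ ![t a, d₁ a, d₂ a]) :
    ∀ x ∈ Icc a b, Orthonormal ℝ ![t x, d₁ x, d₂ x] := by
  obtain ⟨-, hd₁d₁₀, hd₂d₂₀, htd₁₀, htd₂₀, hd₁d₂₀⟩ := orthonormal_vecCons_three_iff.1 h₀
  have htt : ∀ x ∈ Icc a b, ⟪t x, t x⟫ = 1 := fun x hx => by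
    rw [real_inner_self_eq_norm_sq, hunit x hx, one_pow]
  have htd₁ : ∀ x ∈ Icc a b, ⟪t x, d₁ x⟫ = 0 := fun x hx =>
    htd₁₀ ▸ inner_const_of_hasDerivWithinAt_Icc ht hd₁ (fun y hy => by
      rw [real_inner_smul_right, htt y hy, real_inner_comm (d₁ y), hu₂ y hy]; ring) x hx
  have htd₂ : ∀ x ∈ Icc a b, ⟪t x, d₂ x⟫ = 0 := fun x hx =>
    htd₂₀ ▸ inner_const_of_hasDerivWithinAt_Icc ht hd₂ (fun y hy => by
      rw [real_inner_smul_right, htt y hy, real_inner_comm (d₂ y), hu₁ y hy]; ring) x hx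
  have hd₁d₁ := inner_const_of_hasDerivWithinAt_Icc hd₁ hd₁ fun y hy => by
    rw [real_inner_smul_right, real_inner_smul_left, real_inner_comm, htd₁ y hy]; ring
  have hd₁d₂ := inner_const_of_hasDerivWithinAt_Icc hd₁ hd₂ fun y hy => by
    rw [real_inner_smul_right, real_inner_smul_left, real_inner_comm, htd₁ y hy, htd₂ y hy]; ring
  have hd₂d₂ := inner_const_of_hasDerivWithinAt_Icc hd₂ hd₂ fun y hy => by
    rw [real_inner_smul_right, real_inner_smul_left, real_inner_comm, htd₂ y hy]; ring
  intro x hx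
  exact orthonormal_vecCons_three_iff.2 ⟨htt x hx, hd₁d₁ x hx ▸ hd₁d₁₀, hd₂d₂ x hx ▸ hd₂d₂₀,
    htd₁ x hx, htd₂ x hx, hd₁d₂ x hx ▸ hd₁d₂₀⟩

end

theorem volterra_gives_rpaf_general
    (L : ℝ) (hL : 0 < L)
    (t t' d₁ d₂ : ℝ → EuclideanSpace ℝ (Fin 3)) (a₁ a₂ : EuclideanSpace ℝ (Fin 3))
    (u₁ u₂ : ℝ → ℝ)
    (htder : ∀ s ∈ Set.Icc (0:ℝ) L, HasDerivWithinAt t (t' s) (Set.Icc 0 L) s)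
    (hunit : ∀ s ∈ Set.Icc (0:ℝ) L, ‖t s‖ = 1)
    (h0 : Orthonormal ℝ ![t 0, a₁, a₂])
    (hu₁cont : ContinuousOn u₁ (Set.Icc 0 L))
    (hu₂cont : ContinuousOn u₂ (Set.Icc 0 L))
    (hV₁ : ∀ s ∈ Set.Icc (0:ℝ) L,
      u₁ s = -⟪a₂, t' s⟫ - ∫ r in (0:ℝ)..s, u₁ r * ⟪t r, t' s⟫)
    (hV₂ : ∀ s ∈ Set.Icc (0:ℝ) L,
      u₂ s = ⟪a₁, t' s⟫ - ∫ r in (0:ℝ)..s, u₂ r * ⟪t r, t' s⟫)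
    (hd₁ : ∀ s ∈ Set.Icc (0:ℝ) L, d₁ s = a₁ - ∫ r in (0:ℝ)..s, u₂ r • t r)
    (hd₂ : ∀ s ∈ Set.Icc (0:ℝ) L, d₂ s = a₂ + ∫ r in (0:ℝ)..s, u₁ r • t r) :
    ∀ s ∈ Set.Icc (0:ℝ) L,
      Orthonormal ℝ ![t s, d₁ s, d₂ s] ∧
      t' s = u₂ s • d₁ s - u₁ s • d₂ s ∧
      HasDerivWithinAt d₁ (-(u₂ s) • t s) (Set.Icc 0 L) s ∧
      HasDerivWithinAt d₂ (u₁ s • t s) (Set.Icc 0 L) s ∧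
      d₁ 0 = a₁ ∧ d₂ 0 = a₂ := by
  have htc : ContinuousOn t (Icc 0 L) := fun s hs => (htder s hs).continuousWithinAt
  have hg : ∀ u : ℝ → ℝ, ContinuousOn u (Icc 0 L) → ContinuousOn (fun r => u r • t r) (Icc 0 L) :=
    fun u hu => hu.smul htc
  have hd₁der : ∀ s ∈ Icc (0:ℝ) L, HasDerivWithinAt d₁ (-(u₂ s) • t s) (Icc 0 L) s :=
    fun s hs => by
      simpa only [neg_smul] using
        (((hg u₂ hu₂cont).hasDerivWithinAt_integral_Icc hs).const_sub a₁).congr hd₁ (hd₁ s hs)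
  have hd₂der : ∀ s ∈ Icc (0:ℝ) L, HasDerivWithinAt d₂ (u₁ s • t s) (Icc 0 L) s :=
    fun s hs => (((hg u₁ hu₁cont).hasDerivWithinAt_integral_Icc hs).const_add a₂).congr
      hd₂ (hd₂ s hs)
  have hd₁0 : d₁ 0 = a₁ := by simp [hd₁ 0 (left_mem_Icc.2 hL.le)]
  have hd₂0 : d₂ 0 = a₂ := by simp [hd₂ 0 (left_mem_Icc.2 hL.le)]
  have hinner : ∀ u : ℝ → ℝ, ContinuousOn u (Icc 0 L) → ∀ s ∈ Icc (0:ℝ) L,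
      ⟪∫ r in (0:ℝ)..s, u r • t r, t' s⟫ = ∫ r in (0:ℝ)..s, u r * ⟪t r, t' s⟫ := fun u hu s hs => by
    rw [intervalIntegral.inner_integral_left ((hg u hu).intervalIntegrable_of_mem_Icc hs)]
    simp only [real_inner_smul_left]
  have hd₁t' : ∀ s ∈ Icc (0:ℝ) L, ⟪d₁ s, t' s⟫ = u₂ s := fun s hs => by
    rw [hd₁ s hs, inner_sub_left, hinner u₂ hu₂cont s hs, hV₂ s hs]
  have hd₂t' : ∀ s ∈ Icc (0:ℝ) L, ⟪d₂ s, t' s⟫ = -u₁ s := fun s hs => by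
    rw [hd₂ s hs, inner_add_left, hinner u₁ hu₁cont s hs, hV₁ s hs]; ring
  have hon := orthonormal_of_hasDerivWithinAt_frame htder hd₁der hd₂der hunit hd₂t' hd₁t'
    (by rwa [hd₁0, hd₂0])
  intro s hs
  refine ⟨hon s hs, ?_, hd₁der s hs, hd₂der s hs, hd₁0, hd₂0⟩
  have htt' : ⟪t s, t' s⟫ = 0 :=
    inner_eq_zero_of_hasDerivWithinAt_of_norm_eq (htder s hs) (uniqueDiffOn_Icc hL s hs) hs hunit
  rw [(hon s hs).eq_inner_smul_add_three finrank_euclideanSpace_fin (t' s), htt', hd₁t' s hs,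
    hd₂t' s hs]
  module

/-- If `u₁, u₂` solve the Volterra integral equations and `d₁, d₂` are
defined by the corresponding integrals, then `{t, d₁, d₂}` is an orthonormal moving
frame satisfying `t' = u₂ d₁ − u₁ d₂`, `d₁' = −u₂ t`, `d₂' = u₁ t`, i.e. it is a
relatively parallel adapted frame with initial data `t(0), a₁, a₂`. -/
theorem volterra_gives_rpaf
    (L : ℝ) (hL : 0 < L)
    (t t' d₁ d₂ : ℝ → EuclideanSpace ℝ (Fin 3)) (a₁ a₂ : EuclideanSpace ℝ (Fin 3))
    (u₁ u₂ : ℝ → ℝ)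
    (htder : ∀ s ∈ Set.Icc (0:ℝ) L, HasDerivWithinAt t (t' s) (Set.Icc 0 L) s)
    (ht'cont : ContinuousOn t' (Set.Icc 0 L))
    (hunit : ∀ s ∈ Set.Icc (0:ℝ) L, ‖t s‖ = 1)
    (h0 : Orthonormal ℝ ![t 0, a₁, a₂])
    (hu₁cont : ContinuousOn u₁ (Set.Icc 0 L))
    (hu₂cont : ContinuousOn u₂ (Set.Icc 0 L))
    (hV₁ : ∀ s ∈ Set.Icc (0:ℝ) L,
      u₁ s = -⟪a₂, t' s⟫ - ∫ r in (0:ℝ)..s, u₁ r * ⟪t r, t' s⟫)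
    (hV₂ : ∀ s ∈ Set.Icc (0:ℝ) L,
      u₂ s = ⟪a₁, t' s⟫ - ∫ r in (0:ℝ)..s, u₂ r * ⟪t r, t' s⟫)
    (hd₁ : ∀ s ∈ Set.Icc (0:ℝ) L, d₁ s = a₁ - ∫ r in (0:ℝ)..s, u₂ r • t r)
    (hd₂ : ∀ s ∈ Set.Icc (0:ℝ) L, d₂ s = a₂ + ∫ r in (0:ℝ)..s, u₁ r • t r) :
    ∀ s ∈ Set.Icc (0:ℝ) L,
      Orthonormal ℝ ![t s, d₁ s, d₂ s] ∧
      t' s = u₂ s • d₁ s - u₁ s • d₂ s ∧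
      HasDerivWithinAt d₁ (-(u₂ s) • t s) (Set.Icc 0 L) s ∧
      HasDerivWithinAt d₂ (u₁ s • t s) (Set.Icc 0 L) s ∧
      d₁ 0 = a₁ ∧ d₂ 0 = a₂ :=
  volterra_gives_rpaf_general L hL t t' d₁ d₂ a₁ a₂ u₁ u₂ htder hunit h0 hu₁cont hu₂cont hV₁ hV₂ hd₁
    hd₂
end

section
/- Let L > 0, let u₁, u₂, u₃ : [0,L] → ℝ be continuous, and let t, d₁, d₂ : [0,L] → ℝ³ be differentiable maps satisfying the system t' = u₂ d₁ − u₁ d₂, d₁' = −u₂ t + u₃ d₂, d₂' = u₁ t − u₃ d₁ on [0,L]. If {t(0), d₁(0), d₂(0)} is an orthonormal set, then {t(s), d₁(s), d₂(s)} is an orthonormal set for every s ∈ [0,L]. -/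
/-!
Write the frame as `e = (t, d₁, d₂)`; the system reads `eᵢ' = ∑ₖ Aᵢₖ eₖ` with `A` skew-symmetric.
The Gram matrix `G` of the frame then satisfies `G' = AG + GAᵀ = AG - GA`, so the sum of squares
of the entries of the symmetric matrix `G - 1` has derivative `2 tr((G - 1)(AG - GA)) = 0` by
cyclicity of the trace. Hence it stays `0`, i.e. `G = 1`, along the whole interval.
-/

open scoped RealInnerProductSpace

open Matrix

section FrameEquation

variable {E ι : Type*} [NormedAddCommGroup E] [InnerProductSpace ℝ E] [Fintype ι]

theorem hasDerivWithinAt_gram_apply {e : ℝ → ι → E} {A : Matrix ι ι ℝ} {s : Set ℝ} {x : ℝ}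
    (he : ∀ i, HasDerivWithinAt (fun y => e y i) (∑ k, A i k • e x k) s x) (i j : ι) :
    HasDerivWithinAt (fun y => gram ℝ (e y) i j)
      ((A * gram ℝ (e x) + gram ℝ (e x) * Aᵀ) i j) s x := by
  refine ((he i).inner ℝ (he j)).congr_deriv ?_
  simp only [Matrix.add_apply, mul_apply, transpose_apply, gram_apply, inner_sum, sum_inner,
    real_inner_smul_left, real_inner_smul_right]
  rw [add_comm]
  congr 1
  exact Finset.sum_congr rfl fun k _ => mul_comm _ _

theorem trace_sub_one_mul_commutator_eq_zero [DecidableEq ι] (A G : Matrix ι ι ℝ) :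
    trace ((G - 1) * (A * G - G * A)) = 0 := by
  have hGAG : trace (G * (A * G)) = trace (A * (G * G)) := by
    rw [trace_mul_comm, Matrix.mul_assoc]
  have hGGA : trace (G * (G * A)) = trace (A * (G * G)) := by
    rw [← Matrix.mul_assoc, trace_mul_comm]
  simp only [Matrix.sub_mul, Matrix.mul_sub, Matrix.one_mul, trace_sub, hGAG, hGGA,
    trace_mul_comm A G, sub_self]

theorem sum_sum_mul_eq_trace_transpose_mul (D M : Matrix ι ι ℝ) :
    ∑ i, ∑ j, D i j * M i j = trace (Dᵀ * M) := by
  simp only [trace, diag_apply, mul_apply, transpose_apply]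
  exact Finset.sum_comm

def orthonormalDefect [DecidableEq ι] (v : ι → E) : ℝ := ∑ i, ∑ j, (gram ℝ v - 1) i j ^ 2

theorem orthonormalDefect_eq_zero_iff [DecidableEq ι] {v : ι → E} :
    orthonormalDefect v = 0 ↔ Orthonormal ℝ v :=
  calc orthonormalDefect v = 0 ↔ ∀ i j, (gram ℝ v - 1) i j = 0 := by
        simp only [orthonormalDefect, Fintype.sum_eq_zero_iff_of_nonneg fun i =>
          Finset.sum_nonneg fun j _ => sq_nonneg ((gram ℝ v - 1) i j),
          Fintype.sum_eq_zero_iff_of_nonneg fun j => sq_nonneg _, funext_iff, Pi.zero_apply,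
          sq_eq_zero_iff]
    _ ↔ gram ℝ v - 1 = 0 := Matrix.ext_iff
    _ ↔ Orthonormal ℝ v := by rw [sub_eq_zero, gram_eq_one_iff_orthonormal]

theorem hasDerivWithinAt_orthonormalDefect [DecidableEq ι] {e : ℝ → ι → E}
    {A : Matrix ι ι ℝ} (hA : Aᵀ = -A) {s : Set ℝ} {x : ℝ}
    (he : ∀ i, HasDerivWithinAt (fun y => e y i) (∑ k, A i k • e x k) s x) :
    HasDerivWithinAt (fun y => orthonormalDefect (e y)) 0 s x := by
  have hD : (gram ℝ (e x) - 1)ᵀ = gram ℝ (e x) - 1 := by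
    rw [transpose_sub, transpose_one]
    exact congrArg (· - 1) (Matrix.ext fun i j => real_inner_comm _ _)
  have hderiv := HasDerivWithinAt.fun_sum (u := Finset.univ) fun i _ =>
    HasDerivWithinAt.fun_sum (u := Finset.univ) fun j _ =>
      ((hasDerivWithinAt_gram_apply he i j).sub_const ((1 : Matrix ι ι ℝ) i j)).fun_pow 2
  refine hderiv.congr_deriv ?_
  calc _ = 2 * ∑ i, ∑ j, (gram ℝ (e x) - 1) i j * (A * gram ℝ (e x) + gram ℝ (e x) * Aᵀ) i j := by
        simp only [Finset.mul_sum, Matrix.sub_apply]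
        refine Finset.sum_congr rfl fun i _ => Finset.sum_congr rfl fun j _ => ?_
        norm_num
        ring
    _ = 0 := by
      rw [sum_sum_mul_eq_trace_transpose_mul, hD, hA, Matrix.mul_neg, ← sub_eq_add_neg,
        trace_sub_one_mul_commutator_eq_zero, mul_zero]

theorem Convex.orthonormal_of_hasDerivWithinAt_skew [DecidableEq ι] {s : Set ℝ} (hs : Convex ℝ s)
    {e : ℝ → ι → E} {A : ℝ → Matrix ι ι ℝ} (hA : ∀ x ∈ s, (A x)ᵀ = -A x)
    (he : ∀ x ∈ s, ∀ i, HasDerivWithinAt (fun y => e y i) (∑ k, A x i k • e x k) s x)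
    {a b : ℝ} (ha : a ∈ s) (hb : b ∈ s) (h₀ : Orthonormal ℝ (e a)) : Orthonormal ℝ (e b) := by
  have hconst := hs.norm_image_sub_le_of_norm_hasDerivWithin_le
    (fun x hx => hasDerivWithinAt_orthonormalDefect (hA x hx) (he x hx))
    (fun _ _ => norm_zero.le) ha hb
  rw [zero_mul, norm_le_zero_iff, sub_eq_zero, orthonormalDefect_eq_zero_iff.mpr h₀] at hconst
  exact orthonormalDefect_eq_zero_iff.mp hconst

end FrameEquation

def movingFrameMatrix (u₁ u₂ u₃ : ℝ) : Matrix (Fin 3) (Fin 3) ℝ :=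
  !![0, u₂, -u₁; -u₂, 0, u₃; u₁, -u₃, 0]

theorem transpose_movingFrameMatrix (u₁ u₂ u₃ : ℝ) :
    (movingFrameMatrix u₁ u₂ u₃)ᵀ = -movingFrameMatrix u₁ u₂ u₃ := by
  ext i j
  fin_cases i <;> fin_cases j <;> simp [movingFrameMatrix]

theorem moving_frame_system_preserves_orthonormality_general
    (L : ℝ)
    (t d₁ d₂ : ℝ → EuclideanSpace ℝ (Fin 3)) (u₁ u₂ u₃ : ℝ → ℝ)
    (htder : ∀ s ∈ Set.Icc (0:ℝ) L,
      HasDerivWithinAt t (u₂ s • d₁ s - u₁ s • d₂ s) (Set.Icc 0 L) s)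
    (hd₁der : ∀ s ∈ Set.Icc (0:ℝ) L,
      HasDerivWithinAt d₁ (-(u₂ s) • t s + u₃ s • d₂ s) (Set.Icc 0 L) s)
    (hd₂der : ∀ s ∈ Set.Icc (0:ℝ) L,
      HasDerivWithinAt d₂ (u₁ s • t s - u₃ s • d₁ s) (Set.Icc 0 L) s)
    (h0 : Orthonormal ℝ ![t 0, d₁ 0, d₂ 0]) :
    ∀ s ∈ Set.Icc (0:ℝ) L, Orthonormal ℝ ![t s, d₁ s, d₂ s] := by
  have hframe : ∀ x ∈ Set.Icc (0:ℝ) L, ∀ i, HasDerivWithinAt (fun y => ![t y, d₁ y, d₂ y] i)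
      (∑ k, movingFrameMatrix (u₁ x) (u₂ x) (u₃ x) i k • ![t x, d₁ x, d₂ x] k) (Set.Icc 0 L) x := by
    intro x hx i
    fin_cases i
    · simpa [movingFrameMatrix, Fin.sum_univ_three, sub_eq_add_neg] using htder x hx
    · simpa [movingFrameMatrix, Fin.sum_univ_three] using hd₁der x hx
    · simpa [movingFrameMatrix, Fin.sum_univ_three, sub_eq_add_neg] using hd₂der x hx
  intro s hs
  exact (convex_Icc 0 L).orthonormal_of_hasDerivWithinAt_skew
    (fun x _ => transpose_movingFrameMatrix (u₁ x) (u₂ x) (u₃ x)) hframe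
    ⟨le_rfl, hs.1.trans hs.2⟩ hs h0

/-- If `t, d₁, d₂` satisfy the general moving-frame system
`t' = u₂ d₁ − u₁ d₂`, `d₁' = −u₂ t + u₃ d₂`, `d₂' = u₁ t − u₃ d₁` with continuous
coefficients and start from an orthonormal set, they remain orthonormal on `[0,L]`. -/
theorem moving_frame_system_preserves_orthonormality
    (L : ℝ) (hL : 0 < L)
    (t d₁ d₂ : ℝ → EuclideanSpace ℝ (Fin 3)) (u₁ u₂ u₃ : ℝ → ℝ)
    (hu₁ : ContinuousOn u₁ (Set.Icc 0 L))
    (hu₂ : ContinuousOn u₂ (Set.Icc 0 L))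
    (hu₃ : ContinuousOn u₃ (Set.Icc 0 L))
    (htder : ∀ s ∈ Set.Icc (0:ℝ) L,
      HasDerivWithinAt t (u₂ s • d₁ s - u₁ s • d₂ s) (Set.Icc 0 L) s)
    (hd₁der : ∀ s ∈ Set.Icc (0:ℝ) L,
      HasDerivWithinAt d₁ (-(u₂ s) • t s + u₃ s • d₂ s) (Set.Icc 0 L) s)
    (hd₂der : ∀ s ∈ Set.Icc (0:ℝ) L,
      HasDerivWithinAt d₂ (u₁ s • t s - u₃ s • d₁ s) (Set.Icc 0 L) s)
    (h0 : Orthonormal ℝ ![t 0, d₁ 0, d₂ 0]) :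
    ∀ s ∈ Set.Icc (0:ℝ) L, Orthonormal ℝ ![t s, d₁ s, d₂ s] :=
  moving_frame_system_preserves_orthonormality_general L t d₁ d₂ u₁ u₂ u₃ htder hd₁der hd₂der h0
end
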